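/- CVaR is subadditive (hence convex as a functional): for integrable X, Y on the same probability space and β ∈ (0,1], CVaR_β(X + Y) ≤ CVaR_β(X) + CVaR_β(Y). -/

import Mathlib

/-!
For every pair of thresholds `κ₁, κ₂`, the pointwise bound
`(x + y − (κ₁ + κ₂))₊ ≤ (x − κ₁)₊ + (y − κ₂)₊` shows that the objective of `X + Y` at `κ₁ + κ₂` is
at most the sum of the objectives of `X` at `κ₁` and of `Y` at `κ₂`; taking infima over `κ₁, κ₂`
gives subadditivity. Since `β ≤ 1`, every objective value of `Z` is at least `E[Z]`, so the
infimum on the left is over a set bounded below and is not Lean's junk value `0`.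
-/

open MeasureTheory

noncomputable def cvarObjective {Ω : Type*} [MeasurableSpace Ω] (μ : Measure Ω) (β : ℝ)
    (Z : Ω → ℝ) (κ : ℝ) : ℝ :=
  κ + (1 / β) * ∫ ω, max (Z ω - κ) 0 ∂μ

section

variable {Ω : Type*} [MeasurableSpace Ω] {μ : Measure Ω} {β : ℝ}

lemma integral_le_cvarObjective [IsProbabilityMeasure μ] {Z : Ω → ℝ} (hZ : Integrable Z μ)
    (hβ : β ∈ Set.Ioc (0 : ℝ) 1) (κ : ℝ) : ∫ ω, Z ω ∂μ ≤ cvarObjective μ β Z κ := by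
  have hZκ : Integrable (fun ω => Z ω - κ) μ := hZ.sub (integrable_const κ)
  have h_excess : ∫ ω, Z ω ∂μ - κ ≤ ∫ ω, max (Z ω - κ) 0 ∂μ := by
    have h_mean : ∫ ω, Z ω - κ ∂μ = ∫ ω, Z ω ∂μ - κ := by
      simp [integral_sub hZ (integrable_const κ)]
    rw [← h_mean]
    exact integral_mono hZκ hZκ.pos_part fun ω => le_max_left _ _
  have h_nonneg : 0 ≤ ∫ ω, max (Z ω - κ) 0 ∂μ := integral_nonneg fun ω => le_max_right _ _
  have h_inv : 1 ≤ 1 / β := one_le_one_div hβ.1 hβ.2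
  calc ∫ ω, Z ω ∂μ ≤ κ + ∫ ω, max (Z ω - κ) 0 ∂μ := by linarith
    _ ≤ cvarObjective μ β Z κ := by
      unfold cvarObjective
      gcongr
      exact le_mul_of_one_le_left h_nonneg h_inv

lemma bddBelow_range_cvarObjective [IsProbabilityMeasure μ] {Z : Ω → ℝ}
    (hZ : Integrable Z μ) (hβ : β ∈ Set.Ioc (0 : ℝ) 1) :
    BddBelow (Set.range (cvarObjective μ β Z)) :=
  ⟨∫ ω, Z ω ∂μ, by
    rintro _ ⟨κ, rfl⟩
    exact integral_le_cvarObjective hZ hβ κ⟩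

lemma cvarObjective_add_le [IsFiniteMeasure μ] {X Y : Ω → ℝ} (hX : Integrable X μ)
    (hY : Integrable Y μ) (hβ : 0 ≤ β) (κ₁ κ₂ : ℝ) :
    cvarObjective μ β (X + Y) (κ₁ + κ₂) ≤ cvarObjective μ β X κ₁ + cvarObjective μ β Y κ₂ := by
  have hXκ : Integrable (fun ω => max (X ω - κ₁) 0) μ := (hX.sub (integrable_const κ₁)).pos_part
  have hYκ : Integrable (fun ω => max (Y ω - κ₂) 0) μ := (hY.sub (integrable_const κ₂)).pos_part
  have h_pointwise (ω : Ω) :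
      max ((X + Y) ω - (κ₁ + κ₂)) 0 ≤ max (X ω - κ₁) 0 + max (Y ω - κ₂) 0 := by
    have h := max_add_add_le_max_add_max (a := X ω - κ₁) (b := Y ω - κ₂) (c := 0) (d := 0)
    rw [add_zero] at h
    rwa [Pi.add_apply, add_sub_add_comm]
  have h_integral : ∫ ω, max ((X + Y) ω - (κ₁ + κ₂)) 0 ∂μ ≤
      ∫ ω, max (X ω - κ₁) 0 ∂μ + ∫ ω, max (Y ω - κ₂) 0 ∂μ := by
    rw [← integral_add hXκ hYκ]
    exact integral_mono ((hX.add hY).sub (integrable_const _)).pos_part (hXκ.add hYκ) h_pointwise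
  unfold cvarObjective
  linarith [mul_le_mul_of_nonneg_left h_integral (one_div_nonneg.mpr hβ)]

end

/-- CVaR is subadditive: for integrable `X, Y` on the same probability space and
`β ∈ (0,1]`, `CVaR_β(X + Y) ≤ CVaR_β(X) + CVaR_β(Y)`, where
`CVaR_β(Z) = inf_κ { κ + (1/β) E[(Z − κ)_+] }`. -/
theorem cvar_subadditive
    {Ω : Type*} [MeasurableSpace Ω] (μ : Measure Ω) [IsProbabilityMeasure μ]
    (X Y : Ω → ℝ) (hX : Integrable X μ) (hY : Integrable Y μ)
    (β : ℝ) (hβ : β ∈ Set.Ioc (0 : ℝ) 1) :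
    (⨅ κ : ℝ, (κ + (1 / β) * ∫ ω, max ((X ω + Y ω) - κ) 0 ∂μ)) ≤
      (⨅ κ : ℝ, (κ + (1 / β) * ∫ ω, max (X ω - κ) 0 ∂μ)) +
        (⨅ κ : ℝ, (κ + (1 / β) * ∫ ω, max (Y ω - κ) 0 ∂μ)) := by
  show ⨅ κ, cvarObjective μ β (X + Y) κ ≤
    (⨅ κ, cvarObjective μ β X κ) + ⨅ κ, cvarObjective μ β Y κ
  exact le_ciInf_add_ciInf fun κ₁ κ₂ =>
    (ciInf_le (bddBelow_range_cvarObjective (hX.add hY) hβ) (κ₁ + κ₂)).trans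
      (cvarObjective_add_le hX hY hβ.1.le κ₁ κ₂)
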